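/- arXiv:1909.02297 — 8 statements merged into one kernel-verified Lean document; each statement's English description precedes it below -/
import Mathlib

section
/- Let X₁ and X₂ be independent uniformly distributed Boolean random variables, and set Y₁ = Y₂ = X₁ XOR X₂. Then the unnormalised causal density uCD = I(X₁; Y₂ | X₂) + I(X₂; Y₁ | X₁) equals 2 bits, while the joint (time-delayed) mutual information I((X₁, X₂); (Y₁, Y₂)) equals 1 bit. In particular, the sum of the two conditional transfer entropies strictly exceeds the total mutual information between past and future. -/
open scoped BigOperators

namespace PhiID

variable {Ω : Type*} [Fintype Ω]

/-- `P` is a probability mass function on the finite sample space `Ω`. -/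
def IsPMF (P : Ω → ℝ) : Prop :=
  (∀ ω, 0 ≤ P ω) ∧ ∑ ω, P ω = 1

/-- Probability that the random variable `X` takes the value `a`. -/
noncomputable def prob (P : Ω → ℝ) {α : Type*} [DecidableEq α] (X : Ω → α) (a : α) : ℝ :=
  ∑ ω, if X ω = a then P ω else 0

/-- Shannon entropy (in bits) of the random variable `X`. -/
noncomputable def entropy (P : Ω → ℝ) {α : Type*} [Fintype α] [DecidableEq α]
    (X : Ω → α) : ℝ :=
  -∑ a, prob P X a * Real.logb 2 (prob P X a)

/-- Conditional Shannon entropy (in bits) `H(X | Z)`. -/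
noncomputable def condEntropy (P : Ω → ℝ) {α β : Type*} [Fintype α] [DecidableEq α]
    [Fintype β] [DecidableEq β] (X : Ω → α) (Z : Ω → β) : ℝ :=
  entropy P (fun ω => (X ω, Z ω)) - entropy P Z

/-- Mutual information (in bits) `I(X; Y) = H(X) + H(Y) - H(X,Y)`. -/
noncomputable def mutualInfo (P : Ω → ℝ) {α β : Type*} [Fintype α] [DecidableEq α]
    [Fintype β] [DecidableEq β] (X : Ω → α) (Y : Ω → β) : ℝ :=
  entropy P X + entropy P Y - entropy P (fun ω => (X ω, Y ω))

/-- Conditional mutual information (in bits)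
`I(X; Y | Z) = H(X,Z) + H(Y,Z) - H(X,Y,Z) - H(Z)`. -/
noncomputable def condMutualInfo (P : Ω → ℝ) {α β γ : Type*} [Fintype α] [DecidableEq α]
    [Fintype β] [DecidableEq β] [Fintype γ] [DecidableEq γ]
    (X : Ω → α) (Y : Ω → β) (Z : Ω → γ) : ℝ :=
  entropy P (fun ω => (X ω, Z ω)) + entropy P (fun ω => (Y ω, Z ω))
    - entropy P (fun ω => (X ω, Y ω, Z ω)) - entropy P Z

end PhiID

open PhiID

lemma prob_comp {Ω : Type*} [Fintype Ω] (P : Ω → ℝ) {α : Type*} [DecidableEq α]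
    (X₁ X₂ : Ω → Bool) (g : Bool → Bool → α) (a : α) :
    prob P (fun ω => g (X₁ ω) (X₂ ω)) a
      = ∑ x : Bool, ∑ y : Bool,
          if g x y = a then prob P (fun ω => (X₁ ω, X₂ ω)) (x, y) else 0 := by
  classical
  have h : ∀ x y : Bool, (if g x y = a
        then (∑ ω, if (X₁ ω, X₂ ω) = (x, y) then P ω else 0) else 0)
      = ∑ ω, if (X₁ ω, X₂ ω) = (x, y) ∧ g x y = a then P ω else 0 := by
    intro x y
    split
    · next h0 => simp [h0]
    · next h0 => simp [h0]
  simp only [prob, h]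
  rw [show (∑ x : Bool, ∑ y : Bool, ∑ ω,
        if (X₁ ω, X₂ ω) = (x, y) ∧ g x y = a then P ω else 0)
      = ∑ p : Bool × Bool, ∑ ω,
        if (X₁ ω, X₂ ω) = p ∧ g p.1 p.2 = a then P ω else 0
    from (Fintype.sum_prod_type (f := fun p => ∑ ω,
        if (X₁ ω, X₂ ω) = p ∧ g p.1 p.2 = a then P ω else 0)).symm]
  rw [Finset.sum_comm]
  refine Finset.sum_congr rfl fun ω _ => ?_
  simp [ite_and, Finset.sum_ite_eq]


/-- **Unnormalised causal density can exceed the time-delayed mutual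
information.**  Let `X₁`, `X₂` be independent uniformly distributed Boolean
random variables (i.e. their joint distribution is uniform on `Bool × Bool`)
and let `Y₁ = Y₂ = X₁ XOR X₂`.  Then
`uCD = I(X₁; Y₂ | X₂) + I(X₂; Y₁ | X₁) = 2` bits, while
`I((X₁,X₂); (Y₁,Y₂)) = 1` bit; in particular the sum of the two conditional
transfer entropies strictly exceeds the total mutual information between past
and future. -/
theorem ucd_exceeds_tdmi
    {Ω : Type*} [Fintype Ω] (P : Ω → ℝ) (hP : IsPMF P)
    (X₁ X₂ Y₁ Y₂ : Ω → Bool)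
    (hunif : ∀ a b : Bool, prob P (fun ω => (X₁ ω, X₂ ω)) (a, b) = 1/4)
    (hY₁ : ∀ ω, Y₁ ω = Bool.xor (X₁ ω) (X₂ ω))
    (hY₂ : ∀ ω, Y₂ ω = Bool.xor (X₁ ω) (X₂ ω)) :
    condMutualInfo P X₁ Y₂ X₂ + condMutualInfo P X₂ Y₁ X₁ = 2 ∧
    mutualInfo P (fun ω => (X₁ ω, X₂ ω)) (fun ω => (Y₁ ω, Y₂ ω)) = 1 ∧
    mutualInfo P (fun ω => (X₁ ω, X₂ ω)) (fun ω => (Y₁ ω, Y₂ ω)) <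
      condMutualInfo P X₁ Y₂ X₂ + condMutualInfo P X₂ Y₁ X₁ := by
  classical
  have hlog2 : Real.logb 2 (1/2 : ℝ) = -1 := by
    rw [one_div, Real.logb_inv, Real.logb_self_eq_one] <;> norm_num
  have hlog4 : Real.logb 2 (1/4 : ℝ) = -2 := by
    have h14 : (1/4 : ℝ) = (1/2)^2 := by norm_num
    rw [h14, Real.logb_pow, hlog2]
    norm_num
  have pb : ∀ {α : Type} [DecidableEq α] (g : Bool → Bool → α) (a : α),
      prob P (fun ω => g (X₁ ω) (X₂ ω)) a
        = ∑ x : Bool, ∑ y : Bool, if g x y = a then (1/4 : ℝ) else 0 := by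
    intro α _ g a
    rw [prob_comp]
    simp only [hunif]
  have H1 : entropy P (fun ω => (X₁ ω, X₂ ω)) = 2 := by
    simp only [entropy, pb (fun x y => (x, y))]
    norm_num [Fintype.sum_prod_type, Fintype.sum_bool, hlog4]
  have H2 : entropy P (fun ω => (Bool.xor (X₁ ω) (X₂ ω), X₂ ω)) = 2 := by
    simp only [entropy, pb (fun x y => (Bool.xor x y, y))]
    norm_num [Fintype.sum_prod_type, Fintype.sum_bool, hlog4]
  have H3 : entropy P (fun ω => (X₁ ω, Bool.xor (X₁ ω) (X₂ ω), X₂ ω)) = 2 := by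
    simp only [entropy, pb (fun x y => (x, Bool.xor x y, y))]
    norm_num [Fintype.sum_prod_type, Fintype.sum_bool, hlog4]
  have H4 : entropy P X₂ = 1 := by
    simp only [entropy, pb (fun _ y => y)]
    norm_num [Fintype.sum_bool, hlog2]
  have H5 : entropy P (fun ω => (X₂ ω, X₁ ω)) = 2 := by
    simp only [entropy, pb (fun x y => (y, x))]
    norm_num [Fintype.sum_prod_type, Fintype.sum_bool, hlog4]
  have H6 : entropy P (fun ω => (Bool.xor (X₁ ω) (X₂ ω), X₁ ω)) = 2 := by
    simp only [entropy, pb (fun x y => (Bool.xor x y, x))]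
    norm_num [Fintype.sum_prod_type, Fintype.sum_bool, hlog4]
  have H7 : entropy P (fun ω => (X₂ ω, Bool.xor (X₁ ω) (X₂ ω), X₁ ω)) = 2 := by
    simp only [entropy, pb (fun x y => (y, Bool.xor x y, x))]
    norm_num [Fintype.sum_prod_type, Fintype.sum_bool, hlog4]
  have H8 : entropy P X₁ = 1 := by
    simp only [entropy, pb (fun x _ => x)]
    norm_num [Fintype.sum_bool, hlog2]
  have H9 : entropy P (fun ω => (Bool.xor (X₁ ω) (X₂ ω), Bool.xor (X₁ ω) (X₂ ω))) = 1 := by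
    simp only [entropy, pb (fun x y => (Bool.xor x y, Bool.xor x y))]
    norm_num [Fintype.sum_prod_type, Fintype.sum_bool, hlog2]
  have H10 : entropy P (fun ω => ((X₁ ω, X₂ ω),
      (Bool.xor (X₁ ω) (X₂ ω), Bool.xor (X₁ ω) (X₂ ω)))) = 2 := by
    simp only [entropy, pb (fun x y => ((x, y), (Bool.xor x y, Bool.xor x y)))]
    norm_num [Fintype.sum_prod_type, Fintype.sum_bool, hlog4]
  simp only [condMutualInfo, mutualInfo, hY₁, hY₂]
  rw [H1, H2, H3, H4, H5, H6, H7, H8, H9, H10]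
  norm_num
end

section
/- In the copy transfer system, where X₁, X₂, Y₁ are i.i.d. uniformly distributed Boolean random variables and Y₂ = X₁: I((X₁, X₂); (Y₁, Y₂)) = 1 bit, I(X₁; Y₁) = 0, and I(X₂; Y₂) = 0. Consequently the whole-minus-sum integrated information satisfies Φ^WMS = 1 bit. -/
open scoped BigOperators

open PhiID

/-- **Copy transfer system: whole-minus-sum Φ.**  If `X₁, X₂, Y₁` are i.i.d.
uniformly distributed Boolean random variables (i.e. their joint distribution is
uniform on `Bool³`) and `Y₂ = X₁`, then `I((X₁,X₂); (Y₁,Y₂)) = 1` bit,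
`I(X₁; Y₁) = 0`, `I(X₂; Y₂) = 0`, and consequently
`Φ^WMS = I((X₁,X₂); (Y₁,Y₂)) − I(X₁;Y₁) − I(X₂;Y₂) = 1` bit. -/
theorem copy_transfer_wms_phi
    {Ω : Type*} [Fintype Ω] (P : Ω → ℝ) (hP : IsPMF P)
    (X₁ X₂ Y₁ Y₂ : Ω → Bool)
    (hiid : ∀ a b c : Bool, prob P (fun ω => (X₁ ω, X₂ ω, Y₁ ω)) (a, b, c) = 1/8)
    (hY₂ : ∀ ω, Y₂ ω = X₁ ω) :
    mutualInfo P (fun ω => (X₁ ω, X₂ ω)) (fun ω => (Y₁ ω, Y₂ ω)) = 1 ∧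
    mutualInfo P X₁ Y₁ = 0 ∧
    mutualInfo P X₂ Y₂ = 0 ∧
    mutualInfo P (fun ω => (X₁ ω, X₂ ω)) (fun ω => (Y₁ ω, Y₂ ω))
      - mutualInfo P X₁ Y₁ - mutualInfo P X₂ Y₂ = 1 := by
  classical
  have hY₂' : Y₂ = X₁ := funext hY₂
  simp only [hY₂'] at *
  clear hY₂ hY₂'
  have hprob : ∀ {α : Type} [DecidableEq α] (g : Bool × Bool × Bool → α) (a : α),
      prob P (fun ω => g (X₁ ω, X₂ ω, Y₁ ω)) a
        = ∑ t : Bool × Bool × Bool, if g t = a then (1:ℝ)/8 else 0 := by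
    intro α _ g a
    unfold prob
    calc (∑ ω, if g (X₁ ω, X₂ ω, Y₁ ω) = a then P ω else 0)
        = ∑ ω, ∑ t : Bool × Bool × Bool,
            if (X₁ ω, X₂ ω, Y₁ ω) = t then (if g t = a then P ω else 0) else 0 := by
          refine Finset.sum_congr rfl fun ω _ => ?_
          rw [Finset.sum_ite_eq]
          simp
      _ = ∑ t : Bool × Bool × Bool, ∑ ω,
            if (X₁ ω, X₂ ω, Y₁ ω) = t then (if g t = a then P ω else 0) else 0 :=
          Finset.sum_comm
      _ = ∑ t : Bool × Bool × Bool, if g t = a then (1:ℝ)/8 else 0 := by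
          refine Finset.sum_congr rfl fun t _ => ?_
          by_cases h : g t = a
          · simpa [h, prob] using hiid t.1 t.2.1 t.2.2
          · simp [h]
  have pX1 : ∀ a : Bool, prob P X₁ a = 1/2 := by
    intro a
    refine Eq.trans (hprob (fun t => t.1) a) ?_
    cases a <;> norm_num [Fintype.sum_prod_type]
  have pX2 : ∀ a : Bool, prob P X₂ a = 1/2 := by
    intro a
    refine Eq.trans (hprob (fun t => t.2.1) a) ?_
    cases a <;> norm_num [Fintype.sum_prod_type]
  have pY1 : ∀ a : Bool, prob P Y₁ a = 1/2 := by
    intro a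
    refine Eq.trans (hprob (fun t => t.2.2) a) ?_
    cases a <;> norm_num [Fintype.sum_prod_type]
  have pX1X2 : ∀ a b : Bool, prob P (fun ω => (X₁ ω, X₂ ω)) (a, b) = 1/4 := by
    intro a b
    refine Eq.trans (hprob (fun t => (t.1, t.2.1)) (a, b)) ?_
    cases a <;> cases b <;> norm_num [Fintype.sum_prod_type]
  have pY1X1 : ∀ a b : Bool, prob P (fun ω => (Y₁ ω, X₁ ω)) (a, b) = 1/4 := by
    intro a b
    refine Eq.trans (hprob (fun t => (t.2.2, t.1)) (a, b)) ?_
    cases a <;> cases b <;> norm_num [Fintype.sum_prod_type]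
  have pX1Y1 : ∀ a b : Bool, prob P (fun ω => (X₁ ω, Y₁ ω)) (a, b) = 1/4 := by
    intro a b
    refine Eq.trans (hprob (fun t => (t.1, t.2.2)) (a, b)) ?_
    cases a <;> cases b <;> norm_num [Fintype.sum_prod_type]
  have pX2X1 : ∀ a b : Bool, prob P (fun ω => (X₂ ω, X₁ ω)) (a, b) = 1/4 := by
    intro a b
    refine Eq.trans (hprob (fun t => (t.2.1, t.1)) (a, b)) ?_
    cases a <;> cases b <;> norm_num [Fintype.sum_prod_type]
  have pJ : ∀ a b c d : Bool,
      prob P (fun ω => ((X₁ ω, X₂ ω), (Y₁ ω, X₁ ω))) ((a, b), (c, d))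
        = if d = a then (1:ℝ)/8 else 0 := by
    intro a b c d
    refine Eq.trans (hprob (fun t => ((t.1, t.2.1), (t.2.2, t.1))) ((a, b), (c, d))) ?_
    cases a <;> cases b <;> cases c <;> cases d <;> norm_num [Fintype.sum_prod_type]
  -- logarithms
  have l2 : Real.logb 2 2 = 1 := by
    simp [Real.logb_self_eq_one]
  have l4 : Real.logb 2 4 = 2 := by
    rw [show (4:ℝ) = 2 ^ (2:ℕ) by norm_num, Real.logb_pow, l2]; norm_num
  have l8 : Real.logb 2 8 = 3 := by
    rw [show (8:ℝ) = 2 ^ (3:ℕ) by norm_num, Real.logb_pow, l2]; norm_num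
  -- entropies
  have eX1 : entropy P X₁ = 1 := by
    simp [entropy, pX1, l2]
  have eX2 : entropy P X₂ = 1 := by
    simp [entropy, pX2, l2]
  have eY1 : entropy P Y₁ = 1 := by
    simp [entropy, pY1, l2]
  have eX1X2 : entropy P (fun ω => (X₁ ω, X₂ ω)) = 2 := by
    simp [entropy, Fintype.sum_prod_type, pX1X2, l4]
  have eY1X1 : entropy P (fun ω => (Y₁ ω, X₁ ω)) = 2 := by
    simp [entropy, Fintype.sum_prod_type, pY1X1, l4]
  have eX1Y1 : entropy P (fun ω => (X₁ ω, Y₁ ω)) = 2 := by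
    simp [entropy, Fintype.sum_prod_type, pX1Y1, l4]
  have eX2X1 : entropy P (fun ω => (X₂ ω, X₁ ω)) = 2 := by
    simp [entropy, Fintype.sum_prod_type, pX2X1, l4]
  have eJ : entropy P (fun ω => ((X₁ ω, X₂ ω), (Y₁ ω, X₁ ω))) = 3 := by
    simp [entropy, Fintype.sum_prod_type, pJ, l8]; norm_num
  have h1 : mutualInfo P (fun ω => (X₁ ω, X₂ ω)) (fun ω => (Y₁ ω, X₁ ω)) = 1 := by
    simp only [mutualInfo]
    rw [eX1X2, eY1X1, eJ]; norm_num
  have h2 : mutualInfo P X₁ Y₁ = 0 := by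
    simp only [mutualInfo]
    rw [eX1, eY1, eX1Y1]; norm_num
  have h3 : mutualInfo P X₂ X₁ = 0 := by
    simp only [mutualInfo]
    rw [eX2, eX1, eX2X1]; norm_num
  exact ⟨h1, h2, h3, by rw [h1, h2, h3]; norm_num⟩
end

section
/- In the parity-preserving random (PPR) system, where X₁, X₂, Y₁ are i.i.d. uniformly distributed Boolean random variables and Y₂ = X₁ XOR X₂ XOR Y₁: both transfer entropies vanish, i.e. I(X₁; Y₂ | X₂) = 0 and I(X₂; Y₁ | X₁) = 0, so the unnormalised causal density uCD equals 0 even though I((X₁, X₂); (Y₁, Y₂)) = 1 bit. -/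
open scoped BigOperators

open PhiID

namespace PPRAux

open PhiID

variable {Ω : Type*} [Fintype Ω]

lemma prob_comp (P : Ω → ℝ) (T : Ω → Bool × Bool × Bool)
    (hT : ∀ t, prob P T t = 1/8) {α : Type*} [DecidableEq α]
    (f : Bool × Bool × Bool → α) (v : α) :
    prob P (fun ω => f (T ω)) v = ∑ t : Bool × Bool × Bool, if f t = v then (1:ℝ)/8 else 0 := by
  unfold prob at *
  calc ∑ ω, (if f (T ω) = v then P ω else 0)
      = ∑ ω, ∑ t : Bool × Bool × Bool, if T ω = t then (if f t = v then P ω else 0) else 0 := by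
        refine Finset.sum_congr rfl fun ω _ => ?_
        rw [Finset.sum_ite_eq]
        simp
    _ = ∑ t : Bool × Bool × Bool, ∑ ω, if T ω = t then (if f t = v then P ω else 0) else 0 :=
        Finset.sum_comm
    _ = ∑ t : Bool × Bool × Bool, if f t = v then (1:ℝ)/8 else 0 := by
        refine Finset.sum_congr rfl fun t _ => ?_
        by_cases h : f t = v
        · simp only [h, if_true]
          exact hT t
        · simp [h]

lemma entropy_comp (P : Ω → ℝ) (T : Ω → Bool × Bool × Bool)
    (hT : ∀ t, prob P T t = 1/8) {α : Type*} [Fintype α] [DecidableEq α]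
    (f : Bool × Bool × Bool → α) :
    entropy P (fun ω => f (T ω)) =
      -∑ a, (∑ t : Bool × Bool × Bool, if f t = a then (1:ℝ)/8 else 0) *
        Real.logb 2 (∑ t : Bool × Bool × Bool, if f t = a then (1:ℝ)/8 else 0) := by
  unfold entropy
  congr 1
  exact Finset.sum_congr rfl fun a _ => by rw [prob_comp P T hT f a]

lemma logb_half : Real.logb 2 (1/2) = -1 := by
  rw [show (1/2:ℝ) = 2^(-1:ℤ) by norm_num]
  unfold Real.logb; rw [Real.log_zpow]; push_cast
  rw [mul_div_assoc, Real.log_div_log]; simp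

lemma logb_quarter : Real.logb 2 (1/4) = -2 := by
  rw [show (1/4:ℝ) = 2^(-2:ℤ) by norm_num]
  unfold Real.logb; rw [Real.log_zpow]; push_cast
  rw [mul_div_assoc, Real.log_div_log]; simp

lemma logb_eighth : Real.logb 2 (1/8) = -3 := by
  rw [show (1/8:ℝ) = 2^(-3:ℤ) by norm_num]
  unfold Real.logb; rw [Real.log_zpow]; push_cast
  rw [mul_div_assoc, Real.log_div_log]; simp

end PPRAux


/-- **Parity-preserving random (PPR) system: vanishing causal density.**
If `X₁, X₂, Y₁` are i.i.d. uniformly distributed Boolean random variables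
(i.e. their joint distribution is uniform on `Bool³`) and
`Y₂ = X₁ XOR X₂ XOR Y₁`, then both transfer entropies vanish,
`I(X₁; Y₂ | X₂) = 0` and `I(X₂; Y₁ | X₁) = 0`, so the unnormalised causal
density `uCD = I(X₁; Y₂ | X₂) + I(X₂; Y₁ | X₁)` equals `0` even though
`I((X₁,X₂); (Y₁,Y₂)) = 1` bit. -/
theorem ppr_zero_causal_density
    {Ω : Type*} [Fintype Ω] (P : Ω → ℝ) (hP : IsPMF P)
    (X₁ X₂ Y₁ Y₂ : Ω → Bool)
    (hiid : ∀ a b c : Bool, prob P (fun ω => (X₁ ω, X₂ ω, Y₁ ω)) (a, b, c) = 1/8)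
    (hY₂ : ∀ ω, Y₂ ω = Bool.xor (Bool.xor (X₁ ω) (X₂ ω)) (Y₁ ω)) :
    condMutualInfo P X₁ Y₂ X₂ = 0 ∧
    condMutualInfo P X₂ Y₁ X₁ = 0 ∧
    condMutualInfo P X₁ Y₂ X₂ + condMutualInfo P X₂ Y₁ X₁ = 0 ∧
    mutualInfo P (fun ω => (X₁ ω, X₂ ω)) (fun ω => (Y₁ ω, Y₂ ω)) = 1 := by
  have hY₂' : Y₂ = fun ω => Bool.xor (Bool.xor (X₁ ω) (X₂ ω)) (Y₁ ω) := funext hY₂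
  subst hY₂'
  set T : Ω → Bool × Bool × Bool := fun ω => (X₁ ω, X₂ ω, Y₁ ω) with hTdef
  have hT : ∀ t, prob P T t = 1/8 := by
    rintro ⟨a, b, c⟩; exact hiid a b c
  -- individual entropies
  have hB : ∀ (f : Bool × Bool × Bool → Bool),
      (∀ b : Bool, (∑ t : Bool × Bool × Bool, if f t = b then (1:ℝ)/8 else 0) = 1/2) →
      entropy P (fun ω => f (T ω)) = 1 := by
    intro f hf
    rw [PPRAux.entropy_comp P T hT f]
    simp only [Fintype.sum_bool, hf]
    rw [PPRAux.logb_half]; ring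
  have eX₁ : entropy P X₁ = 1 := by
    have h := PPRAux.entropy_comp P T hT (fun t => t.1)
    rw [show X₁ = fun ω => (T ω).1 from rfl, h]
    simp only [Fintype.sum_prod_type, Fintype.sum_bool]
    norm_num [PPRAux.logb_half]
  have eX₂ : entropy P X₂ = 1 := by
    have h := PPRAux.entropy_comp P T hT (fun t => t.2.1)
    rw [show X₂ = fun ω => (T ω).2.1 from rfl, h]
    simp only [Fintype.sum_prod_type, Fintype.sum_bool]
    norm_num [PPRAux.logb_half]
  have eX₁X₂ : entropy P (fun ω => (X₁ ω, X₂ ω)) = 2 := by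
    have h := PPRAux.entropy_comp P T hT (fun t => (t.1, t.2.1))
    rw [h]
    simp only [Fintype.sum_prod_type, Fintype.sum_bool, Prod.mk.injEq]
    norm_num [PPRAux.logb_quarter]
  have eX₂X₁ : entropy P (fun ω => (X₂ ω, X₁ ω)) = 2 := by
    have h := PPRAux.entropy_comp P T hT (fun t => (t.2.1, t.1))
    rw [h]
    simp only [Fintype.sum_prod_type, Fintype.sum_bool, Prod.mk.injEq]
    norm_num [PPRAux.logb_quarter]
  have eY₂X₂ : entropy P (fun ω => (Bool.xor (Bool.xor (X₁ ω) (X₂ ω)) (Y₁ ω), X₂ ω)) = 2 := by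
    have h := PPRAux.entropy_comp P T hT
      (fun t => (Bool.xor (Bool.xor t.1 t.2.1) t.2.2, t.2.1))
    rw [h]
    simp only [Fintype.sum_prod_type, Fintype.sum_bool, Prod.mk.injEq]
    norm_num [PPRAux.logb_quarter]
  have eY₁X₁ : entropy P (fun ω => (Y₁ ω, X₁ ω)) = 2 := by
    have h := PPRAux.entropy_comp P T hT (fun t => (t.2.2, t.1))
    rw [h]
    simp only [Fintype.sum_prod_type, Fintype.sum_bool, Prod.mk.injEq]
    norm_num [PPRAux.logb_quarter]
  have eY₁Y₂ : entropy P (fun ω => (Y₁ ω, Bool.xor (Bool.xor (X₁ ω) (X₂ ω)) (Y₁ ω))) = 2 := by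
    have h := PPRAux.entropy_comp P T hT
      (fun t => (t.2.2, Bool.xor (Bool.xor t.1 t.2.1) t.2.2))
    rw [h]
    simp only [Fintype.sum_prod_type, Fintype.sum_bool, Prod.mk.injEq]
    norm_num [PPRAux.logb_quarter]
  have e3a : entropy P
      (fun ω => (X₁ ω, Bool.xor (Bool.xor (X₁ ω) (X₂ ω)) (Y₁ ω), X₂ ω)) = 3 := by
    have h := PPRAux.entropy_comp P T hT
      (fun t => (t.1, Bool.xor (Bool.xor t.1 t.2.1) t.2.2, t.2.1))
    rw [h]
    simp only [Fintype.sum_prod_type, Fintype.sum_bool, Prod.mk.injEq]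
    norm_num [PPRAux.logb_eighth]
  have e3b : entropy P (fun ω => (X₂ ω, Y₁ ω, X₁ ω)) = 3 := by
    have h := PPRAux.entropy_comp P T hT (fun t => (t.2.1, t.2.2, t.1))
    rw [h]
    simp only [Fintype.sum_prod_type, Fintype.sum_bool, Prod.mk.injEq]
    norm_num [PPRAux.logb_eighth]
  have e3c : entropy P
      (fun ω => ((X₁ ω, X₂ ω), Y₁ ω, Bool.xor (Bool.xor (X₁ ω) (X₂ ω)) (Y₁ ω))) = 3 := by
    have h := PPRAux.entropy_comp P T hT
      (fun t => ((t.1, t.2.1), t.2.2, Bool.xor (Bool.xor t.1 t.2.1) t.2.2))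
    rw [h]
    simp only [Fintype.sum_prod_type, Fintype.sum_bool, Prod.mk.injEq]
    norm_num [PPRAux.logb_eighth]
  have h1 : condMutualInfo P X₁ (fun ω => Bool.xor (Bool.xor (X₁ ω) (X₂ ω)) (Y₁ ω)) X₂ = 0 := by
    unfold condMutualInfo
    rw [eX₁X₂, eY₂X₂, e3a, eX₂]; ring
  have h2 : condMutualInfo P X₂ Y₁ X₁ = 0 := by
    unfold condMutualInfo
    rw [eX₂X₁, eY₁X₁, e3b, eX₁]; ring
  have h4 : mutualInfo P (fun ω => (X₁ ω, X₂ ω))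
      (fun ω => (Y₁ ω, Bool.xor (Bool.xor (X₁ ω) (X₂ ω)) (Y₁ ω))) = 1 := by
    unfold mutualInfo
    rw [eX₁X₂, eY₁Y₂, e3c]; ring
  exact ⟨h1, h2, by rw [h1, h2]; ring, h4⟩
end

section
/- In the fully redundant system, where W is a uniformly distributed Boolean random variable and X₁ = X₂ = Y₁ = Y₂ = W: the whole-minus-sum integrated information is strictly negative; explicitly, Φ^WMS = I((X₁, X₂); (Y₁, Y₂)) − I(X₁; Y₁) − I(X₂; Y₂) = 1 − 1 − 1 = −1 bit. -/
open scoped BigOperators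

open PhiID

section Aux

variable {Ω : Type*} [Fintype Ω]

lemma prob_comp_inj (P : Ω → ℝ) {α β : Type*} [DecidableEq α] [DecidableEq β]
    (W : Ω → α) (g : α → β) (hg : Function.Injective g) (b : α) :
    prob P (fun ω => g (W ω)) (g b) = prob P W b := by
  unfold prob
  refine Finset.sum_congr rfl fun ω _ => ?_
  simp [hg.eq_iff]

lemma prob_comp_not_mem (P : Ω → ℝ) {α β : Type*} [DecidableEq α] [DecidableEq β]
    (W : Ω → α) (g : α → β) (b : β) (hb : ∀ a, g a ≠ b) :
    prob P (fun ω => g (W ω)) b = 0 := by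
  unfold prob
  refine Finset.sum_eq_zero fun ω _ => ?_
  simp [hb (W ω)]

lemma entropy_comp_inj (P : Ω → ℝ) {α β : Type*} [Fintype α] [DecidableEq α]
    [Fintype β] [DecidableEq β] (W : Ω → α) (g : α → β) (hg : Function.Injective g) :
    entropy P (fun ω => g (W ω)) = entropy P W := by
  unfold entropy
  congr 1
  rw [show (∑ a : α, prob P W a * Real.logb 2 (prob P W a))
      = ∑ a : α, prob P (fun ω => g (W ω)) (g a) *
          Real.logb 2 (prob P (fun ω => g (W ω)) (g a)) from
    Finset.sum_congr rfl fun a _ => by rw [prob_comp_inj P W g hg]]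
  rw [← Finset.sum_image (g := g)
      (f := fun b => prob P (fun ω => g (W ω)) b * Real.logb 2 (prob P (fun ω => g (W ω)) b))
      (fun x _ y _ h => hg h)]
  refine (Finset.sum_subset (Finset.subset_univ _) ?_).symm
  intro b _ hb
  have hb' : ∀ a, g a ≠ b := fun a h => hb (Finset.mem_image.2 ⟨a, Finset.mem_univ a, h⟩)
  rw [prob_comp_not_mem P W g b hb']
  simp

lemma entropy_uniform_bool (P : Ω → ℝ) (W : Ω → Bool)
    (hW : ∀ a : Bool, prob P W a = 1/2) : entropy P W = 1 := by
  unfold entropy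
  rw [Fintype.sum_bool, hW, hW]
  have : Real.logb 2 (1/2 : ℝ) = -1 := by
    rw [one_div, Real.logb_inv, Real.logb_self_eq_one] <;> norm_num
  rw [this]
  ring

end Aux

/-- **Fully redundant system: negative whole-minus-sum Φ.**
If `W` is a uniformly distributed Boolean random variable and
`X₁ = X₂ = Y₁ = Y₂ = W`, then
`Φ^WMS = I((X₁,X₂); (Y₁,Y₂)) − I(X₁;Y₁) − I(X₂;Y₂) = 1 − 1 − 1 = −1` bit;
in particular it is strictly negative. -/
theorem fully_redundant_negative_wms_phi
    {Ω : Type*} [Fintype Ω] (P : Ω → ℝ) (hP : IsPMF P)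
    (W X₁ X₂ Y₁ Y₂ : Ω → Bool)
    (hW : ∀ a : Bool, prob P W a = 1/2)
    (hX₁ : ∀ ω, X₁ ω = W ω) (hX₂ : ∀ ω, X₂ ω = W ω)
    (hY₁ : ∀ ω, Y₁ ω = W ω) (hY₂ : ∀ ω, Y₂ ω = W ω) :
    mutualInfo P (fun ω => (X₁ ω, X₂ ω)) (fun ω => (Y₁ ω, Y₂ ω)) = 1 ∧
    mutualInfo P X₁ Y₁ = 1 ∧
    mutualInfo P X₂ Y₂ = 1 ∧
    mutualInfo P (fun ω => (X₁ ω, X₂ ω)) (fun ω => (Y₁ ω, Y₂ ω))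
      - mutualInfo P X₁ Y₁ - mutualInfo P X₂ Y₂ = -1 ∧
    mutualInfo P (fun ω => (X₁ ω, X₂ ω)) (fun ω => (Y₁ ω, Y₂ ω))
      - mutualInfo P X₁ Y₁ - mutualInfo P X₂ Y₂ < 0 := by
  have hEW : entropy P W = 1 := entropy_uniform_bool P W hW
  simp only [funext hX₁, funext hX₂, funext hY₁, funext hY₂]
  have hdiag : entropy P (fun ω => (W ω, W ω)) = 1 := by
    rw [entropy_comp_inj P W (fun w => (w, w)) (fun a b h => by simpa using h)]
    exact hEW
  have hpair2 : entropy P (fun ω => ((W ω, W ω), (W ω, W ω))) = 1 := by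
    rw [entropy_comp_inj P W (fun w => ((w, w), (w, w)))
      (fun a b h => by simpa using h)]
    exact hEW
  have hpair1 : entropy P (fun ω => (W ω, W ω)) = 1 := hdiag
  have hMI1 : mutualInfo P W W = 1 := by
    unfold mutualInfo
    rw [hEW, hdiag]; ring
  have hMI2 : mutualInfo P (fun ω => (W ω, W ω)) (fun ω => (W ω, W ω)) = 1 := by
    unfold mutualInfo
    rw [hdiag, hpair2]; ring
  refine ⟨hMI2, hMI1, hMI1, by rw [hMI2, hMI1]; ring, by rw [hMI2, hMI1]; norm_num⟩
end

section
/- Let p be the joint distribution of the parity-preserving random (PPR) system, where X₁, X₂, Y₁ are i.i.d. uniformly distributed Boolean random variables and Y₂ = X₁ XOR X₂ XOR Y₁. Then p satisfies the Φ_G constraints p(yᵢ | x₁, x₂) = p(yᵢ | xᵢ) for i = 1, 2 (indeed p(yᵢ | x₁, x₂) = 1/2 for all values), and therefore Φ_G = min_{q ∈ M_G} D_KL(p ∥ q) = 0, even though the whole-minus-sum integrated information of the system is Φ^WMS = 1 bit. -/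
open scoped BigOperators

namespace PhiID

/-- The state space of a bivariate Boolean system: `(x₁, x₂, y₁, y₂)`. -/
abbrev State := Bool × Bool × Bool × Bool

/-- First past variable `X₁`. -/
def pX₁ (z : State) : Bool := z.1
/-- Second past variable `X₂`. -/
def pX₂ (z : State) : Bool := z.2.1
/-- First future variable `Y₁`. -/
def pY₁ (z : State) : Bool := z.2.2.1
/-- Second future variable `Y₂`. -/
def pY₂ (z : State) : Bool := z.2.2.2

/-- The Φ_G constraints defining the manifold `M_G`: for `i = 1, 2`,
`q(yᵢ | x₁, x₂) = q(yᵢ | xᵢ)`, written in cross-multiplied form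
`q(yᵢ, x₁, x₂) · q(xᵢ) = q(yᵢ, xᵢ) · q(x₁, x₂)` so as to avoid division by
zero (the two forms agree whenever the conditioning events have positive
probability). -/
def PhiGConstraint (q : State → ℝ) : Prop :=
  (∀ x₁ x₂ y₁ : Bool,
    prob q (fun z => (pY₁ z, pX₁ z, pX₂ z)) (y₁, x₁, x₂) * prob q pX₁ x₁ =
      prob q (fun z => (pY₁ z, pX₁ z)) (y₁, x₁) *
        prob q (fun z => (pX₁ z, pX₂ z)) (x₁, x₂)) ∧
  (∀ x₁ x₂ y₂ : Bool,
    prob q (fun z => (pY₂ z, pX₁ z, pX₂ z)) (y₂, x₁, x₂) * prob q pX₂ x₂ =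
      prob q (fun z => (pY₂ z, pX₂ z)) (y₂, x₂) *
        prob q (fun z => (pX₁ z, pX₂ z)) (x₁, x₂))

/-- Kullback–Leibler divergence `D_KL(p ∥ q)` in bits, for pmfs on `State`.
(The usual conventions `0 · log(0/q) = 0` hold with Lean's junk values; the
absolute-continuity requirement `q z = 0 → p z = 0` is imposed separately,
since `D_KL(p ∥ q) = +∞` when `p` is not absolutely continuous w.r.t. `q`.) -/
noncomputable def klDiv (p q : State → ℝ) : ℝ :=
  ∑ z, p z * Real.logb 2 (p z / q z)

end PhiID

open PhiID

private lemma pb2 : Real.logb 2 (2 : ℝ) = 1 := Real.logb_self_eq_one one_lt_two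
private lemma pb4 : Real.logb 2 (4 : ℝ) = 2 := by
  rw [show (4:ℝ) = (2:ℝ)^2 by norm_num, Real.logb_pow, Real.logb_self_eq_one one_lt_two]; norm_num
private lemma pb8 : Real.logb 2 (8 : ℝ) = 3 := by
  rw [show (8:ℝ) = (2:ℝ)^3 by norm_num, Real.logb_pow, Real.logb_self_eq_one one_lt_two]; norm_num
private lemma lb2 : Real.logb 2 (1/2 : ℝ) = -1 := by
  rw [show (1/2:ℝ) = 2⁻¹ by norm_num, Real.logb_inv, Real.logb_self_eq_one one_lt_two]
private lemma lb4 : Real.logb 2 (1/4 : ℝ) = -2 := by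
  rw [show (1/4:ℝ) = ((2:ℝ)^2)⁻¹ by norm_num, Real.logb_inv, Real.logb_pow,
    Real.logb_self_eq_one one_lt_two]; norm_num
private lemma lb8 : Real.logb 2 (1/8 : ℝ) = -3 := by
  rw [show (1/8:ℝ) = ((2:ℝ)^3)⁻¹ by norm_num, Real.logb_inv, Real.logb_pow,
    Real.logb_self_eq_one one_lt_two]; norm_num

/-- **PPR system has Φ_G = 0 but Φ^WMS = 1.**  Let `p` be the joint
distribution of the parity-preserving random system: `X₁, X₂, Y₁` i.i.d.
uniform Booleans and `Y₂ = X₁ XOR X₂ XOR Y₁`.  Then `p` satisfies the Φ_G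
constraints `p(yᵢ | x₁, x₂) = p(yᵢ | xᵢ)` for `i = 1, 2` (indeed
`p(yᵢ | x₁, x₂) = 1/2` for all values), therefore
`Φ_G = min_{q ∈ M_G} D_KL(p ∥ q) = 0`, even though `Φ^WMS = 1` bit. -/
theorem ppr_phiG_zero
    (p : State → ℝ)
    (hp : ∀ x₁ x₂ y₁ y₂ : Bool,
      p (x₁, x₂, y₁, y₂) =
        if y₂ = Bool.xor (Bool.xor x₁ x₂) y₁ then 1/8 else 0) :
    -- `p(yᵢ | x₁, x₂) = 1/2` for all values:
    (∀ x₁ x₂ y₁ : Bool,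
      prob p (fun z => (pY₁ z, pX₁ z, pX₂ z)) (y₁, x₁, x₂) =
        (1/2) * prob p (fun z => (pX₁ z, pX₂ z)) (x₁, x₂)) ∧
    (∀ x₁ x₂ y₂ : Bool,
      prob p (fun z => (pY₂ z, pX₁ z, pX₂ z)) (y₂, x₁, x₂) =
        (1/2) * prob p (fun z => (pX₁ z, pX₂ z)) (x₁, x₂)) ∧
    -- `p` itself lies on the constraint manifold `M_G`:
    PhiGConstraint p ∧
    -- hence the geometric integrated information vanishes:
    sInf {d : ℝ | ∃ q : State → ℝ, IsPMF q ∧ PhiGConstraint q ∧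
      (∀ z, q z = 0 → p z = 0) ∧ d = klDiv p q} = 0 ∧
    -- while the whole-minus-sum integrated information is 1 bit:
    mutualInfo p (fun z => (pX₁ z, pX₂ z)) (fun z => (pY₁ z, pY₂ z))
      - mutualInfo p pX₁ pY₁ - mutualInfo p pX₂ pY₂ = 1 := by
  have hp0 : ∀ z, 0 ≤ p z := by
    rintro ⟨a, b, c, d⟩; rw [hp]; split <;> norm_num
  have hXX : ∀ x₁ x₂ : Bool, prob p (fun z => (pX₁ z, pX₂ z)) (x₁, x₂) = 1/4 := by
    intro x₁ x₂; cases x₁ <;> cases x₂ <;>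
      simp [prob, Fintype.sum_prod_type, hp, pX₁, pX₂, pY₁, pY₂] <;> norm_num
  have hA : ∀ x₁ x₂ y₁ : Bool,
      prob p (fun z => (pY₁ z, pX₁ z, pX₂ z)) (y₁, x₁, x₂) = 1/8 := by
    intro x₁ x₂ y₁; cases x₁ <;> cases x₂ <;> cases y₁ <;>
      simp [prob, Fintype.sum_prod_type, hp, pX₁, pX₂, pY₁, pY₂] <;> norm_num
  have hB : ∀ x₁ x₂ y₂ : Bool,
      prob p (fun z => (pY₂ z, pX₁ z, pX₂ z)) (y₂, x₁, x₂) = 1/8 := by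
    intro x₁ x₂ y₂; cases x₁ <;> cases x₂ <;> cases y₂ <;>
      simp [prob, Fintype.sum_prod_type, hp, pX₁, pX₂, pY₁, pY₂] <;> norm_num
  have hX1 : ∀ x : Bool, prob p pX₁ x = 1/2 := by
    intro x; cases x <;>
      simp [prob, Fintype.sum_prod_type, hp, pX₁, pX₂, pY₁, pY₂] <;> norm_num
  have hX2 : ∀ x : Bool, prob p pX₂ x = 1/2 := by
    intro x; cases x <;>
      simp [prob, Fintype.sum_prod_type, hp, pX₁, pX₂, pY₁, pY₂] <;> norm_num
  have hYX1 : ∀ y x : Bool, prob p (fun z => (pY₁ z, pX₁ z)) (y, x) = 1/4 := by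
    intro y x; cases y <;> cases x <;>
      simp [prob, Fintype.sum_prod_type, hp, pX₁, pX₂, pY₁, pY₂] <;> norm_num
  have hYX2 : ∀ y x : Bool, prob p (fun z => (pY₂ z, pX₂ z)) (y, x) = 1/4 := by
    intro y x; cases y <;> cases x <;>
      simp [prob, Fintype.sum_prod_type, hp, pX₁, pX₂, pY₁, pY₂] <;> norm_num
  have hcon : PhiGConstraint p := by
    constructor
    · intro x₁ x₂ y₁; rw [hA, hX1, hYX1, hXX]; norm_num
    · intro x₁ x₂ y₂; rw [hB, hX2, hYX2, hXX]; norm_num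
  refine ⟨fun x₁ x₂ y₁ => by rw [hA, hXX]; norm_num,
          fun x₁ x₂ y₂ => by rw [hB, hXX]; norm_num, hcon, ?_, ?_⟩
  · -- sInf = 0
    set S := {d : ℝ | ∃ q : State → ℝ, IsPMF q ∧ PhiGConstraint q ∧
      (∀ z, q z = 0 → p z = 0) ∧ d = klDiv p q}
    have hsum : ∑ z, p z = 1 := by
      simp [Fintype.sum_prod_type, hp]; norm_num
    have hmem : (0 : ℝ) ∈ S := by
      refine ⟨p, ⟨hp0, hsum⟩, hcon, fun z h => h, ?_⟩
      rw [klDiv]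
      refine (Finset.sum_eq_zero fun z _ => ?_).symm
      rcases eq_or_ne (p z) 0 with h | h
      · simp [h]
      · rw [div_self h]; simp
    have hlb : ∀ d ∈ S, (0 : ℝ) ≤ d := by
      rintro d ⟨q, ⟨hq0, hq1⟩, -, hac, rfl⟩
      have key : ∀ z, p z - q z ≤ p z * Real.log (p z / q z) := by
        intro z
        rcases eq_or_ne (p z) 0 with h | h
        · simp [h, hq0 z]
        · have hpz : 0 < p z := lt_of_le_of_ne (hp0 z) (Ne.symm h)
          have hqz : 0 < q z := by
            rcases eq_or_ne (q z) 0 with h' | h'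
            · exact absurd (hac z h') h
            · exact lt_of_le_of_ne (hq0 z) (Ne.symm h')
          have h1 : Real.log (q z / p z) ≤ q z / p z - 1 :=
            Real.log_le_sub_one_of_pos (by positivity)
          have h2 : Real.log (p z / q z) = -Real.log (q z / p z) := by
            rw [← Real.log_inv]; congr 1; field_simp
          rw [h2]
          have := mul_le_mul_of_nonneg_left h1 (le_of_lt hpz)
          have h3 : p z * (q z / p z - 1) = q z - p z := by field_simp
          nlinarith
      have hsum2 : (0:ℝ) ≤ ∑ z, p z * Real.log (p z / q z) := by
        calc (0:ℝ) = ∑ z, (p z - q z) := by rw [Finset.sum_sub_distrib, hsum, hq1]; ring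
        _ ≤ _ := Finset.sum_le_sum fun z _ => key z
      have : klDiv p q = (∑ z, p z * Real.log (p z / q z)) / Real.log 2 := by
        rw [klDiv, Finset.sum_div]
        refine Finset.sum_congr rfl fun z _ => ?_
        rw [Real.logb, mul_div_assoc]
      rw [this]
      exact div_nonneg hsum2 (Real.log_nonneg one_le_two)
    exact le_antisymm (csInf_le ⟨0, hlb⟩ hmem) (le_csInf ⟨0, hmem⟩ hlb)
  · -- WMS = 1
    have e1 : entropy p (fun z => (pX₁ z, pX₂ z)) = 2 := by
      simp [entropy, prob, Fintype.sum_prod_type, hp, pX₁, pX₂, pY₁, pY₂]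
      norm_num [lb4, pb4]
    have e2 : entropy p (fun z => (pY₁ z, pY₂ z)) = 2 := by
      simp [entropy, prob, Fintype.sum_prod_type, hp, pX₁, pX₂, pY₁, pY₂]
      norm_num [lb4, pb4]
    have e3 : entropy p (fun z => ((pX₁ z, pX₂ z), (pY₁ z, pY₂ z))) = 3 := by
      simp [entropy, prob, Fintype.sum_prod_type, hp, pX₁, pX₂, pY₁, pY₂]
      norm_num [lb8, pb8]
    have e4 : entropy p pX₁ = 1 := by
      simp [entropy, prob, Fintype.sum_prod_type, hp, pX₁, pX₂, pY₁, pY₂]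
      norm_num [lb2, pb2]
    have e5 : entropy p pX₂ = 1 := by
      simp [entropy, prob, Fintype.sum_prod_type, hp, pX₁, pX₂, pY₁, pY₂]
      norm_num [lb2, pb2]
    have e6 : entropy p pY₁ = 1 := by
      simp [entropy, prob, Fintype.sum_prod_type, hp, pX₁, pX₂, pY₁, pY₂]
      norm_num [lb2, pb2]
    have e7 : entropy p pY₂ = 1 := by
      simp [entropy, prob, Fintype.sum_prod_type, hp, pX₁, pX₂, pY₁, pY₂]
      norm_num [lb2, pb2]
    have e8 : entropy p (fun z => (pX₁ z, pY₁ z)) = 2 := by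
      simp [entropy, prob, Fintype.sum_prod_type, hp, pX₁, pX₂, pY₁, pY₂]
      norm_num [lb4, pb4]
    have e9 : entropy p (fun z => (pX₂ z, pY₂ z)) = 2 := by
      simp [entropy, prob, Fintype.sum_prod_type, hp, pX₁, pX₂, pY₁, pY₂]
      norm_num [lb4, pb4]
    rw [mutualInfo, mutualInfo, mutualInfo, e1, e2, e3, e4, e5, e6, e7, e8, e9]
    norm_num
end

section
/- Let p be the joint distribution of the copy transfer system, where X₁, X₂, Y₁ are i.i.d. uniformly distributed Boolean random variables and Y₂ = X₁. Then p violates the Φ_G constraint q(y₂ | x₁, x₂) = q(y₂ | x₂), and the geometric integrated information is strictly positive: the infimum over all probability distributions q on Bool⁴ satisfying q(yᵢ | x₁, x₂) = q(yᵢ | xᵢ) for i = 1, 2 of D_KL(p ∥ q) is strictly greater than 0. -/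
set_option maxHeartbeats 1000000


open scoped BigOperators

open PhiID
/-- AM–GM: `x·y ≤ (x+y)²/4`. -/
lemma PhiID.amgm (x y : ℝ) : x*y ≤ (x+y)^2/4 := by nlinarith [sq_nonneg (x-y)]

/-- Algebraic core: product of the eight support masses is at most `2⁻³²`. -/
lemma PhiID.prodBound (c1 c2 c3 c4 c5 c6 c7 c8 s1 s2 s3 s4 w1 w2 w3 w4 a0 a1 : ℝ)
    (hc1 : 0 < c1) (hc2 : 0 < c2) (hc3 : 0 < c3) (hc4 : 0 < c4)
    (hc5 : 0 < c5) (hc6 : 0 < c6) (hc7 : 0 < c7) (hc8 : 0 < c8)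
    (hs1 : 0 ≤ s1) (hs2 : 0 ≤ s2) (hs3 : 0 ≤ s3) (hs4 : 0 ≤ s4)
    (hw1 : 0 ≤ w1) (hw2 : 0 ≤ w2) (hw3 : 0 ≤ w3) (hw4 : 0 ≤ w4)
    (ha0 : 0 < a0) (ha1 : 0 < a1)
    (h1 : (c1+c2)*a0 = s1*w1) (h2 : (c3+c4)*a0 = s2*w2)
    (h3 : (c5+c6)*a1 = s3*w3) (h4 : (c7+c8)*a1 = s4*w4)
    (hsa0 : s1+s2 = a0) (hsa1 : s3+s4 = a1)
    (hwa0 : w1+w2 = a0) (hwa1 : w3+w4 = a1) (ha : a0+a1 = 1) :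
    c1*c2*(c3*c4)*(c5*c6)*(c7*c8) ≤ 1/4294967296 := by
  have hm : ((c1+c2)*(c3+c4)*((c5+c6)*(c7+c8)))*(a0^2*a1^2)
      = (s1*s2*(s3*s4))*(w1*w2*(w3*w4)) := by
    have h : ((c1+c2)*a0)*(((c3+c4)*a0)*(((c5+c6)*a1)*((c7+c8)*a1)))
        = (s1*w1)*((s2*w2)*((s3*w3)*(s4*w4))) := by rw [h1, h2, h3, h4]
    linear_combination h
  have hss0 : s1*s2 ≤ a0^2/4 := by have h := PhiID.amgm s1 s2; rw [hsa0] at h; exact h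
  have hss1 : s3*s4 ≤ a1^2/4 := by have h := PhiID.amgm s3 s4; rw [hsa1] at h; exact h
  have hww0 : w1*w2 ≤ a0^2/4 := by have h := PhiID.amgm w1 w2; rw [hwa0] at h; exact h
  have hww1 : w3*w4 ≤ a1^2/4 := by have h := PhiID.amgm w3 w4; rw [hwa1] at h; exact h
  have hS : s1*s2*(s3*s4) ≤ (a0^2/4)*(a1^2/4) :=
    mul_le_mul hss0 hss1 (mul_nonneg hs3 hs4) (by positivity)
  have hW : w1*w2*(w3*w4) ≤ (a0^2/4)*(a1^2/4) :=
    mul_le_mul hww0 hww1 (mul_nonneg hw3 hw4) (by positivity)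
  have hSW : (s1*s2*(s3*s4))*(w1*w2*(w3*w4)) ≤ ((a0^2/4)*(a1^2/4))*((a0^2/4)*(a1^2/4)) :=
    mul_le_mul hS hW (mul_nonneg (mul_nonneg hw1 hw2) (mul_nonneg hw3 hw4)) (by positivity)
  have hpos : (0:ℝ) < a0^2*a1^2 := by positivity
  have hMprod : (c1+c2)*(c3+c4)*((c5+c6)*(c7+c8)) ≤ a0^2*a1^2/256 := by
    have hring : ((a0^2/4)*(a1^2/4))*((a0^2/4)*(a1^2/4)) = a0^2*a1^2/256*(a0^2*a1^2) := by ring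
    have h' : ((c1+c2)*(c3+c4)*((c5+c6)*(c7+c8)))*(a0^2*a1^2)
        ≤ (a0^2*a1^2/256)*(a0^2*a1^2) := by
      rw [hm]; linarith only [hSW, hring]
    exact le_of_mul_le_mul_right h' hpos
  have ha01 : a0*a1 ≤ 1/4 := by
    have h := PhiID.amgm a0 a1; rw [ha] at h; linarith only [h]
  have ha01' : a0^2*a1^2 ≤ 1/16 := by
    calc a0^2*a1^2 = (a0*a1)^2 := by ring
      _ ≤ (1/4:ℝ)^2 := pow_le_pow_left₀ (mul_nonneg ha0.le ha1.le) ha01 2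
      _ = 1/16 := by norm_num
  have hM16 : (c1+c2)*(c3+c4)*((c5+c6)*(c7+c8)) ≤ 1/4096 := by
    linarith only [hMprod, ha01']
  have hcc1 : c1*c2 ≤ (c1+c2)^2/4 := PhiID.amgm c1 c2
  have hcc2 : c3*c4 ≤ (c3+c4)^2/4 := PhiID.amgm c3 c4
  have hcc3 : c5*c6 ≤ (c5+c6)^2/4 := PhiID.amgm c5 c6
  have hcc4 : c7*c8 ≤ (c7+c8)^2/4 := PhiID.amgm c7 c8
  have t1 : c1*c2*(c3*c4) ≤ ((c1+c2)^2/4)*((c3+c4)^2/4) :=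
    mul_le_mul hcc1 hcc2 (mul_nonneg hc3.le hc4.le) (by positivity)
  have t2 : c1*c2*(c3*c4)*(c5*c6) ≤ ((c1+c2)^2/4)*((c3+c4)^2/4)*((c5+c6)^2/4) :=
    mul_le_mul t1 hcc3 (mul_nonneg hc5.le hc6.le) (by positivity)
  have t3 : c1*c2*(c3*c4)*(c5*c6)*(c7*c8)
      ≤ ((c1+c2)^2/4)*((c3+c4)^2/4)*((c5+c6)^2/4)*((c7+c8)^2/4) :=
    mul_le_mul t2 hcc4 (mul_nonneg hc7.le hc8.le) (by positivity)
  have hMnn : (0:ℝ) ≤ (c1+c2)*(c3+c4)*((c5+c6)*(c7+c8)) := by positivity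
  have hsq : ((c1+c2)*(c3+c4)*((c5+c6)*(c7+c8)))^2 ≤ (1/4096:ℝ)^2 :=
    pow_le_pow_left₀ hMnn hM16 2
  calc c1*c2*(c3*c4)*(c5*c6)*(c7*c8)
      ≤ ((c1+c2)^2/4)*((c3+c4)^2/4)*((c5+c6)^2/4)*((c7+c8)^2/4) := t3
    _ = ((c1+c2)*(c3+c4)*((c5+c6)*(c7+c8)))^2/256 := by ring
    _ ≤ (1/4096:ℝ)^2/256 := by linarith only [hsq]
    _ = 1/4294967296 := by norm_num

/-- Logarithmic core: if the product of eight positive masses is at most `2⁻³²`,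
the corresponding KL sum is at least `1` bit. -/
lemma PhiID.logBound (c1 c2 c3 c4 c5 c6 c7 c8 : ℝ)
    (h1 : 0 < c1) (h2 : 0 < c2) (h3 : 0 < c3) (h4 : 0 < c4)
    (h5 : 0 < c5) (h6 : 0 < c6) (h7 : 0 < c7) (h8 : 0 < c8)
    (hprod : c1*c2*(c3*c4)*(c5*c6)*(c7*c8) ≤ 1/4294967296) :
    1 ≤ 8⁻¹ * Real.logb 2 (8⁻¹/c1) + 8⁻¹ * Real.logb 2 (8⁻¹/c2)
      + 8⁻¹ * Real.logb 2 (8⁻¹/c3) + 8⁻¹ * Real.logb 2 (8⁻¹/c4)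
      + 8⁻¹ * Real.logb 2 (8⁻¹/c5) + 8⁻¹ * Real.logb 2 (8⁻¹/c6)
      + 8⁻¹ * Real.logb 2 (8⁻¹/c7) + 8⁻¹ * Real.logb 2 (8⁻¹/c8) := by
  have key : ∀ x : ℝ, 0 < x → Real.logb 2 (8⁻¹/x) = -Real.logb 2 (8*x) := by
    intro x hx
    rw [show (8⁻¹/x : ℝ) = (8*x)⁻¹ by rw [div_eq_mul_inv, ← mul_inv], Real.logb_inv]
  rw [key c1 h1, key c2 h2, key c3 h3, key c4 h4, key c5 h5, key c6 h6, key c7 h7, key c8 h8]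
  have hL : Real.logb 2 (8*c1*(8*c2)*(8*c3)*(8*c4)*(8*c5)*(8*c6)*(8*c7)*(8*c8))
      = Real.logb 2 (8*c1) + Real.logb 2 (8*c2) + Real.logb 2 (8*c3) + Real.logb 2 (8*c4)
        + Real.logb 2 (8*c5) + Real.logb 2 (8*c6) + Real.logb 2 (8*c7) + Real.logb 2 (8*c8) := by
    rw [Real.logb_mul (by positivity) (by positivity),
        Real.logb_mul (by positivity) (by positivity),
        Real.logb_mul (by positivity) (by positivity),
        Real.logb_mul (by positivity) (by positivity),
        Real.logb_mul (by positivity) (by positivity),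
        Real.logb_mul (by positivity) (by positivity),
        Real.logb_mul (by positivity) (by positivity)]
  have harg : 8*c1*(8*c2)*(8*c3)*(8*c4)*(8*c5)*(8*c6)*(8*c7)*(8*c8) ≤ 1/256 := by
    have hr : 8*c1*(8*c2)*(8*c3)*(8*c4)*(8*c5)*(8*c6)*(8*c7)*(8*c8)
        = 16777216*(c1*c2*(c3*c4)*(c5*c6)*(c7*c8)) := by ring
    rw [hr]; linarith only [hprod]
  have hargpos : (0:ℝ) < 8*c1*(8*c2)*(8*c3)*(8*c4)*(8*c5)*(8*c6)*(8*c7)*(8*c8) := by positivity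
  have hle : Real.logb 2 (8*c1*(8*c2)*(8*c3)*(8*c4)*(8*c5)*(8*c6)*(8*c7)*(8*c8))
      ≤ Real.logb 2 (1/256 : ℝ) :=
    (Real.logb_le_logb (by norm_num) hargpos (by norm_num)).mpr harg
  have h256 : Real.logb 2 (1/256 : ℝ) = -8 := by
    rw [show (1/256:ℝ) = ((2:ℝ)^(8:ℕ))⁻¹ by norm_num, Real.logb_inv, Real.logb_pow,
        Real.logb_self_eq_one (by norm_num : (1:ℝ) < 2)]
    norm_num
  rw [h256] at hle
  linarith only [hL ▸ hle]

/-- Any feasible `q` has `klDiv p q ≥ 1`. -/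
lemma PhiID.keyBound (p q : State → ℝ)
    (hp : ∀ x₁ x₂ y₁ y₂ : Bool, p (x₁, x₂, y₁, y₂) = if y₂ = x₁ then 1/8 else 0)
    (hq : IsPMF q) (hcon : PhiGConstraint q) (habs : ∀ z, q z = 0 → p z = 0) :
    1 ≤ klDiv p q := by
  have nn : ∀ z, 0 ≤ q z := hq.1
  have hqpos : ∀ x₁ x₂ y₁ : Bool, 0 < q (x₁, x₂, y₁, x₁) := by
    intro a b c
    rcases eq_or_lt_of_le (nn (a, b, c, a)) with h | h
    · exfalso; have h2 := habs _ h.symm; rw [hp] at h2; simp at h2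
    · exact h
  have hsum := hq.2
  simp [Fintype.sum_prod_type] at hsum
  have e1 := hcon.2 false false false
  have e2 := hcon.2 true false true
  have e3 := hcon.2 false true false
  have e4 := hcon.2 true true true
  simp [prob, pX₁, pX₂, pY₁, pY₂, Fintype.sum_prod_type] at e1 e2 e3 e4
  have ha : (q (false, false, false, false) + q (false, false, false, true) + q (false, false, true, false) + q (false, false, true, true) + q (true, false, false, false) + q (true, false, false, true) + q (true, false, true, false) + q (true, false, true, true)) + (q (false, true, false, false) + q (false, true, false, true) + q (false, true, true, false) + q (false, true, true, true) + q (true, true, false, false) + q (true, true, false, true) + q (true, true, true, false) + q (true, true, true, true)) = 1 := by linarith only [hsum]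
  have ha0 : (0:ℝ) < q (false, false, false, false) + q (false, false, false, true) + q (false, false, true, false) + q (false, false, true, true) + q (true, false, false, false) + q (true, false, false, true) + q (true, false, true, false) + q (true, false, true, true) := by
    linarith only [hqpos false false false, hqpos false false true, hqpos true false false,
      hqpos true false true, nn (false, false, false, false), nn (false, false, false, true), nn (false, false, true, false), nn (false, false, true, true), nn (true, false, false, false), nn (true, false, false, true), nn (true, false, true, false), nn (true, false, true, true)]
  have ha1 : (0:ℝ) < q (false, true, false, false) + q (false, true, false, true) + q (false, true, true, false) + q (false, true, true, true) + q (true, true, false, false) + q (true, true, false, true) + q (true, true, true, false) + q (true, true, true, true) := by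
    linarith only [hqpos false true false, hqpos false true true, hqpos true true false,
      hqpos true true true, nn (false, true, false, false), nn (false, true, false, true), nn (false, true, true, false), nn (false, true, true, true), nn (true, true, false, false), nn (true, true, false, true), nn (true, true, true, false), nn (true, true, true, true)]
  have hs1 : (0:ℝ) ≤ q (false, false, false, false) + q (false, false, true, false) + q (true, false, false, false) + q (true, false, true, false) := by linarith only [nn (false, false, false, false), nn (false, false, true, false), nn (true, false, false, false), nn (true, false, true, false)]
  have hs2 : (0:ℝ) ≤ q (false, false, false, true) + q (false, false, true, true) + q (true, false, false, true) + q (true, false, true, true) := by linarith only [nn (false, false, false, true), nn (false, false, true, true), nn (true, false, false, true), nn (true, false, true, true)]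
  have hs3 : (0:ℝ) ≤ q (false, true, false, false) + q (false, true, true, false) + q (true, true, false, false) + q (true, true, true, false) := by linarith only [nn (false, true, false, false), nn (false, true, true, false), nn (true, true, false, false), nn (true, true, true, false)]
  have hs4 : (0:ℝ) ≤ q (false, true, false, true) + q (false, true, true, true) + q (true, true, false, true) + q (true, true, true, true) := by linarith only [nn (false, true, false, true), nn (false, true, true, true), nn (true, true, false, true), nn (true, true, true, true)]
  have hw1 : (0:ℝ) ≤ q (false, false, false, false) + q (false, false, false, true) + q (false, false, true, false) + q (false, false, true, true) := by linarith only [nn (false, false, false, false), nn (false, false, false, true), nn (false, false, true, false), nn (false, false, true, true)]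
  have hw2 : (0:ℝ) ≤ q (true, false, false, false) + q (true, false, false, true) + q (true, false, true, false) + q (true, false, true, true) := by linarith only [nn (true, false, false, false), nn (true, false, false, true), nn (true, false, true, false), nn (true, false, true, true)]
  have hw3 : (0:ℝ) ≤ q (false, true, false, false) + q (false, true, false, true) + q (false, true, true, false) + q (false, true, true, true) := by linarith only [nn (false, true, false, false), nn (false, true, false, true), nn (false, true, true, false), nn (false, true, true, true)]
  have hw4 : (0:ℝ) ≤ q (true, true, false, false) + q (true, true, false, true) + q (true, true, true, false) + q (true, true, true, true) := by linarith only [nn (true, true, false, false), nn (true, true, false, true), nn (true, true, true, false), nn (true, true, true, true)]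
  have H1 : (q (false, false, false, false) + q (false, false, true, false)) * (q (false, false, false, false) + q (false, false, false, true) + q (false, false, true, false) + q (false, false, true, true) + q (true, false, false, false) + q (true, false, false, true) + q (true, false, true, false) + q (true, false, true, true)) = (q (false, false, false, false) + q (false, false, true, false) + q (true, false, false, false) + q (true, false, true, false)) * (q (false, false, false, false) + q (false, false, false, true) + q (false, false, true, false) + q (false, false, true, true)) := by linear_combination e1
  have H2 : (q (true, false, false, true) + q (true, false, true, true)) * (q (false, false, false, false) + q (false, false, false, true) + q (false, false, true, false) + q (false, false, true, true) + q (true, false, false, false) + q (true, false, false, true) + q (true, false, true, false) + q (true, false, true, true)) = (q (false, false, false, true) + q (false, false, true, true) + q (true, false, false, true) + q (true, false, true, true)) * (q (true, false, false, false) + q (true, false, false, true) + q (true, false, true, false) + q (true, false, true, true)) := by linear_combination e2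
  have H3 : (q (false, true, false, false) + q (false, true, true, false)) * (q (false, true, false, false) + q (false, true, false, true) + q (false, true, true, false) + q (false, true, true, true) + q (true, true, false, false) + q (true, true, false, true) + q (true, true, true, false) + q (true, true, true, true)) = (q (false, true, false, false) + q (false, true, true, false) + q (true, true, false, false) + q (true, true, true, false)) * (q (false, true, false, false) + q (false, true, false, true) + q (false, true, true, false) + q (false, true, true, true)) := by linear_combination e3
  have H4 : (q (true, true, false, true) + q (true, true, true, true)) * (q (false, true, false, false) + q (false, true, false, true) + q (false, true, true, false) + q (false, true, true, true) + q (true, true, false, false) + q (true, true, false, true) + q (true, true, true, false) + q (true, true, true, true)) = (q (false, true, false, true) + q (false, true, true, true) + q (true, true, false, true) + q (true, true, true, true)) * (q (true, true, false, false) + q (true, true, false, true) + q (true, true, true, false) + q (true, true, true, true)) := by linear_combination e4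
  have hprod : q (false, false, false, false)*(q (false, false, true, false))*((q (true, false, false, true))*(q (true, false, true, true)))*((q (false, true, false, false))*(q (false, true, true, false)))*((q (true, true, false, true))*(q (true, true, true, true)))
      ≤ 1/4294967296 :=
    PhiID.prodBound _ _ _ _ _ _ _ _ _ _ _ _ _ _ _ _ _ _
      (hqpos false false false) (hqpos false false true) (hqpos true false false)
      (hqpos true false true) (hqpos false true false) (hqpos false true true)
      (hqpos true true false) (hqpos true true true)
      hs1 hs2 hs3 hs4 hw1 hw2 hw3 hw4 ha0 ha1 H1 H2 H3 H4
      (by ring) (by ring) (by ring)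
      (by ring) ha
  have hp' : p = fun z => if z.2.2.2 = z.1 then 1/8 else 0 := by
    funext z; obtain ⟨a, b, c, d⟩ := z; exact hp a b c d
  have hkl : klDiv p q
      = 8⁻¹ * Real.logb 2 (8⁻¹/(q (false, false, false, false))) + 8⁻¹ * Real.logb 2 (8⁻¹/(q (false, false, true, false)))
      + 8⁻¹ * Real.logb 2 (8⁻¹/(q (true, false, false, true))) + 8⁻¹ * Real.logb 2 (8⁻¹/(q (true, false, true, true)))
      + 8⁻¹ * Real.logb 2 (8⁻¹/(q (false, true, false, false))) + 8⁻¹ * Real.logb 2 (8⁻¹/(q (false, true, true, false)))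
      + 8⁻¹ * Real.logb 2 (8⁻¹/(q (true, true, false, true))) + 8⁻¹ * Real.logb 2 (8⁻¹/(q (true, true, true, true))) := by
    rw [klDiv, hp']
    simp [Fintype.sum_prod_type]
    ring
  rw [hkl]
  exact PhiID.logBound _ _ _ _ _ _ _ _
    (hqpos false false false) (hqpos false false true) (hqpos true false false)
    (hqpos true false true) (hqpos false true false) (hqpos false true true)
    (hqpos true true false) (hqpos true true true) hprod


/-- **Copy transfer system has Φ_G > 0.**  Let `p` be the joint distribution of
the copy transfer system: `X₁, X₂, Y₁` i.i.d. uniform Booleans and `Y₂ = X₁`.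
Then `p` violates the Φ_G constraint `q(y₂ | x₁, x₂) = q(y₂ | x₂)`, and the
geometric integrated information is strictly positive: the infimum, over all
pmfs `q` on `Bool⁴` satisfying `q(yᵢ | x₁, x₂) = q(yᵢ | xᵢ)` for `i = 1, 2`
(w.r.t. which `p` is absolutely continuous, so that `D_KL(p ∥ q) < ∞`), of
`D_KL(p ∥ q)` is strictly greater than `0`. -/
theorem copy_transfer_phiG_positive
    (p : State → ℝ)
    (hp : ∀ x₁ x₂ y₁ y₂ : Bool,
      p (x₁, x₂, y₁, y₂) = if y₂ = x₁ then 1/8 else 0) :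
    -- `p` violates the second Φ_G constraint:
    ¬ (∀ x₁ x₂ y₂ : Bool,
      prob p (fun z => (pY₂ z, pX₁ z, pX₂ z)) (y₂, x₁, x₂) * prob p pX₂ x₂ =
        prob p (fun z => (pY₂ z, pX₂ z)) (y₂, x₂) *
          prob p (fun z => (pX₁ z, pX₂ z)) (x₁, x₂)) ∧
    -- and the geometric integrated information is strictly positive:
    0 < sInf {d : ℝ | ∃ q : State → ℝ, IsPMF q ∧ PhiGConstraint q ∧
      (∀ z, q z = 0 → p z = 0) ∧ d = klDiv p q} := by
  constructor
  · intro hA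
    have hbad := hA true false false
    simp [prob, pX₁, pX₂, pY₁, pY₂, Fintype.sum_prod_type, hp] at hbad
  · have hmem : (1:ℝ) ∈ {d : ℝ | ∃ q : State → ℝ, IsPMF q ∧ PhiGConstraint q ∧
        (∀ z, q z = 0 → p z = 0) ∧ d = klDiv p q} := by
      refine ⟨fun _ => 1/16, ⟨fun _ => by norm_num, ?_⟩, ?_, fun z hz => by norm_num at hz, ?_⟩
      · simp [Fintype.sum_prod_type]
      · constructor <;> intro a b c <;> cases a <;> cases b <;> cases c <;>
          · simp [prob, pX₁, pX₂, pY₁, pY₂, Fintype.sum_prod_type]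
            try ring
      · rw [klDiv]
        norm_num [hp, Fintype.sum_prod_type, Real.logb_self_eq_one]
    refine lt_of_lt_of_le one_pos (le_csInf ⟨1, hmem⟩ ?_)
    rintro d ⟨q, hq, hcon, habs, rfl⟩
    exact PhiID.keyBound p q hp hq hcon habs
end

section
/- Let p be the joint distribution of the downward XOR system, where X₁, X₂, Y₂ are i.i.d. uniformly distributed Boolean random variables and Y₁ = X₁ XOR X₂. Then p violates the Φ_G constraint q(y₁ | x₁, x₂) = q(y₁ | x₁), and the geometric integrated information is strictly positive: the infimum over all probability distributions q on Bool⁴ satisfying q(yᵢ | x₁, x₂) = q(yᵢ | xᵢ) for i = 1, 2 of D_KL(p ∥ q) is strictly greater than 0. -/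
open scoped BigOperators

namespace PhiID

private lemma amgm_logb {a b : ℝ} (ha : 0 < a) (hb : 0 < b) :
    Real.logb 2 a + Real.logb 2 b ≤ 2 * Real.logb 2 (a + b) - 2 := by
  have h1 : Real.logb 2 (a * b) ≤ Real.logb 2 (((a + b) / 2) ^ 2) :=
    (Real.logb_le_logb one_lt_two (by positivity) (by positivity)).2
      (by nlinarith [sq_nonneg (a - b)])
  rw [Real.logb_mul ha.ne' hb.ne'] at h1
  rw [Real.logb_pow, Real.logb_div (by positivity) (by norm_num),
    Real.logb_self_eq_one (by norm_num)] at h1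
  push_cast at h1
  linarith

private lemma logb_cross {a c d b : ℝ} (ha : 0 < a) (hc : 0 < c) (hd : 0 < d) (hb : 0 < b)
    (h : a * c = d * b) :
    Real.logb 2 a + Real.logb 2 c = Real.logb 2 d + Real.logb 2 b := by
  rw [← Real.logb_mul ha.ne' hc.ne', ← Real.logb_mul hd.ne' hb.ne', h]

private lemma logb_inv8 : Real.logb 2 ((8 : ℝ)⁻¹) = -3 := by
  rw [Real.logb_inv, show (8 : ℝ) = 2 ^ (3 : ℕ) by norm_num, Real.logb_pow,
    Real.logb_self_eq_one (by norm_num)]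
  norm_num

private lemma kl_ge_one (p q : State → ℝ)
    (hp : ∀ x₁ x₂ y₁ y₂ : Bool,
      p (x₁, x₂, y₁, y₂) = if y₁ = Bool.xor x₁ x₂ then 1/8 else 0)
    (hq : IsPMF q) (hcon : PhiGConstraint q) (habs : ∀ z, q z = 0 → p z = 0) :
    1 ≤ klDiv p q := by
  obtain ⟨hqnn, hqsum⟩ := hq
  obtain ⟨hc1, -⟩ := hcon
  -- positivity on the support of p
  have hpos : ∀ x1 x2 y2 : Bool, 0 < q (x1, x2, Bool.xor x1 x2, y2) := by
    intro x1 x2 y2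
    rcases (hqnn (x1, x2, Bool.xor x1 x2, y2)).lt_or_eq with h | h
    · exact h
    · exfalso
      have h0 := habs _ h.symm
      rw [hp] at h0
      simp at h0
  -- expansions of the marginals into raw q values
  have hAff : prob q (fun z => (pY₁ z, pX₁ z, pX₂ z)) (false, false, false)
      = q (false,false,false,false) + q (false,false,false,true) := by
    simp [prob, pX₁, pX₂, pY₁, Fintype.sum_prod_type, Fintype.sum_bool]; ring
  have hAft : prob q (fun z => (pY₁ z, pX₁ z, pX₂ z)) (true, false, true)
      = q (false,true,true,false) + q (false,true,true,true) := by
    simp [prob, pX₁, pX₂, pY₁, Fintype.sum_prod_type, Fintype.sum_bool]; ring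
  have hAtf : prob q (fun z => (pY₁ z, pX₁ z, pX₂ z)) (true, true, false)
      = q (true,false,true,false) + q (true,false,true,true) := by
    simp [prob, pX₁, pX₂, pY₁, Fintype.sum_prod_type, Fintype.sum_bool]; ring
  have hAtt : prob q (fun z => (pY₁ z, pX₁ z, pX₂ z)) (false, true, true)
      = q (true,true,false,false) + q (true,true,false,true) := by
    simp [prob, pX₁, pX₂, pY₁, Fintype.sum_prod_type, Fintype.sum_bool]; ring
  have hBff : prob q (fun z => (pX₁ z, pX₂ z)) (false, false)
      = q (false,false,false,false) + q (false,false,false,true)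
        + q (false,false,true,false) + q (false,false,true,true) := by
    simp [prob, pX₁, pX₂, Fintype.sum_prod_type, Fintype.sum_bool]; ring
  have hBft : prob q (fun z => (pX₁ z, pX₂ z)) (false, true)
      = q (false,true,false,false) + q (false,true,false,true)
        + q (false,true,true,false) + q (false,true,true,true) := by
    simp [prob, pX₁, pX₂, Fintype.sum_prod_type, Fintype.sum_bool]; ring
  have hBtf : prob q (fun z => (pX₁ z, pX₂ z)) (true, false)
      = q (true,false,false,false) + q (true,false,false,true)
        + q (true,false,true,false) + q (true,false,true,true) := by
    simp [prob, pX₁, pX₂, Fintype.sum_prod_type, Fintype.sum_bool]; ring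
  have hBtt : prob q (fun z => (pX₁ z, pX₂ z)) (true, true)
      = q (true,true,false,false) + q (true,true,false,true)
        + q (true,true,true,false) + q (true,true,true,true) := by
    simp [prob, pX₁, pX₂, Fintype.sum_prod_type, Fintype.sum_bool]; ring
  have hCf : prob q pX₁ false
      = q (false,false,false,false) + q (false,false,false,true)
        + q (false,false,true,false) + q (false,false,true,true)
        + q (false,true,false,false) + q (false,true,false,true)
        + q (false,true,true,false) + q (false,true,true,true) := by
    simp [prob, pX₁, Fintype.sum_prod_type, Fintype.sum_bool]; ring
  have hCt : prob q pX₁ true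
      = q (true,false,false,false) + q (true,false,false,true)
        + q (true,false,true,false) + q (true,false,true,true)
        + q (true,true,false,false) + q (true,true,false,true)
        + q (true,true,true,false) + q (true,true,true,true) := by
    simp [prob, pX₁, Fintype.sum_prod_type, Fintype.sum_bool]; ring
  have hDf0 : prob q (fun z => (pY₁ z, pX₁ z)) (false, false)
      = q (false,false,false,false) + q (false,false,false,true)
        + q (false,true,false,false) + q (false,true,false,true) := by
    simp [prob, pX₁, pY₁, Fintype.sum_prod_type, Fintype.sum_bool]; ring
  have hDf1 : prob q (fun z => (pY₁ z, pX₁ z)) (true, false)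
      = q (false,false,true,false) + q (false,false,true,true)
        + q (false,true,true,false) + q (false,true,true,true) := by
    simp [prob, pX₁, pY₁, Fintype.sum_prod_type, Fintype.sum_bool]; ring
  have hDt0 : prob q (fun z => (pY₁ z, pX₁ z)) (false, true)
      = q (true,false,false,false) + q (true,false,false,true)
        + q (true,true,false,false) + q (true,true,false,true) := by
    simp [prob, pX₁, pY₁, Fintype.sum_prod_type, Fintype.sum_bool]; ring
  have hDt1 : prob q (fun z => (pY₁ z, pX₁ z)) (true, true)
      = q (true,false,true,false) + q (true,false,true,true)
        + q (true,true,true,false) + q (true,true,true,true) := by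
    simp [prob, pX₁, pY₁, Fintype.sum_prod_type, Fintype.sum_bool]; ring
  -- positivity of all marginals
  have t1 : 0 < q (false,false,false,false) := hpos false false false
  have t2 : 0 < q (false,false,false,true) := hpos false false true
  have t3 : 0 < q (false,true,true,false) := hpos false true false
  have t4 : 0 < q (false,true,true,true) := hpos false true true
  have t5 : 0 < q (true,false,true,false) := hpos true false false
  have t6 : 0 < q (true,false,true,true) := hpos true false true
  have t7 : 0 < q (true,true,false,false) := hpos true true false
  have t8 : 0 < q (true,true,false,true) := hpos true true true
  have n1 := hqnn (false,false,true,false)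
  have n2 := hqnn (false,false,true,true)
  have n3 := hqnn (false,true,false,false)
  have n4 := hqnn (false,true,false,true)
  have n5 := hqnn (true,false,false,false)
  have n6 := hqnn (true,false,false,true)
  have n7 := hqnn (true,true,true,false)
  have n8 := hqnn (true,true,true,true)
  have hAffp : 0 < prob q (fun z => (pY₁ z, pX₁ z, pX₂ z)) (false, false, false) := by
    rw [hAff]; linarith
  have hAftp : 0 < prob q (fun z => (pY₁ z, pX₁ z, pX₂ z)) (true, false, true) := by
    rw [hAft]; linarith
  have hAtfp : 0 < prob q (fun z => (pY₁ z, pX₁ z, pX₂ z)) (true, true, false) := by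
    rw [hAtf]; linarith
  have hAttp : 0 < prob q (fun z => (pY₁ z, pX₁ z, pX₂ z)) (false, true, true) := by
    rw [hAtt]; linarith
  have hBffp : 0 < prob q (fun z => (pX₁ z, pX₂ z)) (false, false) := by rw [hBff]; linarith
  have hBftp : 0 < prob q (fun z => (pX₁ z, pX₂ z)) (false, true) := by rw [hBft]; linarith
  have hBtfp : 0 < prob q (fun z => (pX₁ z, pX₂ z)) (true, false) := by rw [hBtf]; linarith
  have hBttp : 0 < prob q (fun z => (pX₁ z, pX₂ z)) (true, true) := by rw [hBtt]; linarith
  have hCfp : 0 < prob q pX₁ false := by rw [hCf]; linarith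
  have hCtp : 0 < prob q pX₁ true := by rw [hCt]; linarith
  have hDf0p : 0 < prob q (fun z => (pY₁ z, pX₁ z)) (false, false) := by rw [hDf0]; linarith
  have hDf1p : 0 < prob q (fun z => (pY₁ z, pX₁ z)) (true, false) := by rw [hDf1]; linarith
  have hDt0p : 0 < prob q (fun z => (pY₁ z, pX₁ z)) (false, true) := by rw [hDt0]; linarith
  have hDt1p : 0 < prob q (fun z => (pY₁ z, pX₁ z)) (true, true) := by rw [hDt1]; linarith
  -- the four constraint instances, in log form
  have l00 := logb_cross hAffp hCfp hDf0p hBffp (hc1 false false false)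
  have l01 := logb_cross hAftp hCfp hDf1p hBftp (hc1 false true true)
  have l10 := logb_cross hAtfp hCtp hDt1p hBtfp (hc1 true false true)
  have l11 := logb_cross hAttp hCtp hDt0p hBttp (hc1 true true false)
  -- AM-GM: pairs of support points vs their A-marginal
  have g00 : Real.logb 2 (q (false,false,false,false)) + Real.logb 2 (q (false,false,false,true))
      ≤ 2 * Real.logb 2 (prob q (fun z => (pY₁ z, pX₁ z, pX₂ z)) (false, false, false)) - 2 := by
    rw [hAff]; exact amgm_logb t1 t2
  have g01 : Real.logb 2 (q (false,true,true,false)) + Real.logb 2 (q (false,true,true,true))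
      ≤ 2 * Real.logb 2 (prob q (fun z => (pY₁ z, pX₁ z, pX₂ z)) (true, false, true)) - 2 := by
    rw [hAft]; exact amgm_logb t3 t4
  have g10 : Real.logb 2 (q (true,false,true,false)) + Real.logb 2 (q (true,false,true,true))
      ≤ 2 * Real.logb 2 (prob q (fun z => (pY₁ z, pX₁ z, pX₂ z)) (true, true, false)) - 2 := by
    rw [hAtf]; exact amgm_logb t5 t6
  have g11 : Real.logb 2 (q (true,true,false,false)) + Real.logb 2 (q (true,true,false,true))
      ≤ 2 * Real.logb 2 (prob q (fun z => (pY₁ z, pX₁ z, pX₂ z)) (false, true, true)) - 2 := by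
    rw [hAtt]; exact amgm_logb t7 t8
  -- AM-GM: D-pairs vs C
  have hDfsum : prob q (fun z => (pY₁ z, pX₁ z)) (false, false)
      + prob q (fun z => (pY₁ z, pX₁ z)) (true, false) = prob q pX₁ false := by
    rw [hDf0, hDf1, hCf]; ring
  have hDtsum : prob q (fun z => (pY₁ z, pX₁ z)) (false, true)
      + prob q (fun z => (pY₁ z, pX₁ z)) (true, true) = prob q pX₁ true := by
    rw [hDt0, hDt1, hCt]; ring
  have gdf : Real.logb 2 (prob q (fun z => (pY₁ z, pX₁ z)) (false, false))
      + Real.logb 2 (prob q (fun z => (pY₁ z, pX₁ z)) (true, false))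
      ≤ 2 * Real.logb 2 (prob q pX₁ false) - 2 := by
    have h := amgm_logb hDf0p hDf1p; rwa [hDfsum] at h
  have gdt : Real.logb 2 (prob q (fun z => (pY₁ z, pX₁ z)) (false, true))
      + Real.logb 2 (prob q (fun z => (pY₁ z, pX₁ z)) (true, true))
      ≤ 2 * Real.logb 2 (prob q pX₁ true) - 2 := by
    have h := amgm_logb hDt0p hDt1p; rwa [hDtsum] at h
  -- AM-GM chain on the B's, whose total is 1
  have htot : q (false,false,false,false) + q (false,false,false,true)
      + q (false,false,true,false) + q (false,false,true,true)
      + q (false,true,false,false) + q (false,true,false,true)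
      + q (false,true,true,false) + q (false,true,true,true)
      + q (true,false,false,false) + q (true,false,false,true)
      + q (true,false,true,false) + q (true,false,true,true)
      + q (true,true,false,false) + q (true,true,false,true)
      + q (true,true,true,false) + q (true,true,true,true) = 1 := by
    have h := hqsum
    simp [Fintype.sum_prod_type, Fintype.sum_bool] at h
    linarith
  have hBsum : (prob q (fun z => (pX₁ z, pX₂ z)) (false, false)
        + prob q (fun z => (pX₁ z, pX₂ z)) (false, true))
      + (prob q (fun z => (pX₁ z, pX₂ z)) (true, false)
        + prob q (fun z => (pX₁ z, pX₂ z)) (true, true)) = 1 := by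
    rw [hBff, hBft, hBtf, hBtt]; linarith
  have gb1 := amgm_logb hBffp hBftp
  have gb2 := amgm_logb hBtfp hBttp
  have gb3 := amgm_logb (add_pos hBffp hBftp) (add_pos hBtfp hBttp)
  rw [hBsum, Real.logb_one] at gb3
  -- expand the KL divergence
  have hkl : klDiv p q
      = 8⁻¹ * Real.logb 2 (8⁻¹ / q (false,false,false,false))
      + 8⁻¹ * Real.logb 2 (8⁻¹ / q (false,false,false,true))
      + 8⁻¹ * Real.logb 2 (8⁻¹ / q (false,true,true,false))
      + 8⁻¹ * Real.logb 2 (8⁻¹ / q (false,true,true,true))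
      + 8⁻¹ * Real.logb 2 (8⁻¹ / q (true,false,true,false))
      + 8⁻¹ * Real.logb 2 (8⁻¹ / q (true,false,true,true))
      + 8⁻¹ * Real.logb 2 (8⁻¹ / q (true,true,false,false))
      + 8⁻¹ * Real.logb 2 (8⁻¹ / q (true,true,false,true)) := by
    simp [klDiv, hp, Fintype.sum_prod_type, Fintype.sum_bool]; ring
  have hlog : ∀ z : State, 0 < q z →
      Real.logb 2 ((8:ℝ)⁻¹ / q z) = -3 - Real.logb 2 (q z) := by
    intro z hz
    rw [Real.logb_div (by norm_num) hz.ne', logb_inv8]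
  rw [hkl, hlog _ t1, hlog _ t2, hlog _ t3, hlog _ t4, hlog _ t5, hlog _ t6,
    hlog _ t7, hlog _ t8]
  linarith [l00, l01, l10, l11, g00, g01, g10, g11, gdf, gdt, gb1, gb2, gb3]

end PhiID

open PhiID

/-- **Downward XOR system has Φ_G > 0.**  Let `p` be the joint distribution of
the downward XOR system: `X₁, X₂, Y₂` i.i.d. uniform Booleans and
`Y₁ = X₁ XOR X₂`.  Then `p` violates the Φ_G constraint
`q(y₁ | x₁, x₂) = q(y₁ | x₁)`, and the geometric integrated information is
strictly positive: the infimum, over all pmfs `q` on `Bool⁴` satisfying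
`q(yᵢ | x₁, x₂) = q(yᵢ | xᵢ)` for `i = 1, 2` (w.r.t. which `p` is absolutely
continuous, so that `D_KL(p ∥ q) < ∞`), of `D_KL(p ∥ q)` is strictly greater
than `0`. -/
theorem downward_xor_phiG_positive
    (p : State → ℝ)
    (hp : ∀ x₁ x₂ y₁ y₂ : Bool,
      p (x₁, x₂, y₁, y₂) = if y₁ = Bool.xor x₁ x₂ then 1/8 else 0) :
    -- `p` violates the first Φ_G constraint:
    ¬ (∀ x₁ x₂ y₁ : Bool,
      prob p (fun z => (pY₁ z, pX₁ z, pX₂ z)) (y₁, x₁, x₂) * prob p pX₁ x₁ =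
        prob p (fun z => (pY₁ z, pX₁ z)) (y₁, x₁) *
          prob p (fun z => (pX₁ z, pX₂ z)) (x₁, x₂)) ∧
    -- and the geometric integrated information is strictly positive:
    0 < sInf {d : ℝ | ∃ q : State → ℝ, IsPMF q ∧ PhiGConstraint q ∧
      (∀ z, q z = 0 → p z = 0) ∧ d = klDiv p q} := by
  constructor
  · intro h
    have h0 := h false true false
    simp [prob, hp, pX₁, pX₂, pY₁, Fintype.sum_prod_type, Fintype.sum_bool] at h0
  · have hpmf : IsPMF (fun _ : State => (16:ℝ)⁻¹) := by
      constructor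
      · intro ω; norm_num
      · simp [Fintype.sum_prod_type, Fintype.sum_bool]
    have hconstr : PhiGConstraint (fun _ : State => (16:ℝ)⁻¹) := by
      constructor <;> intro x₁ x₂ y <;> cases x₁ <;> cases x₂ <;> cases y <;>
        simp [prob, pX₁, pX₂, pY₁, pY₂, Fintype.sum_prod_type, Fintype.sum_bool] <;> norm_num
    have habs : ∀ z : State, (fun _ : State => (16:ℝ)⁻¹) z = 0 → p z = 0 := by
      intro z hz; norm_num at hz
    have hklval : klDiv p (fun _ : State => (16:ℝ)⁻¹) = 1 := by
      have h2 : ((8:ℝ)⁻¹ / (16:ℝ)⁻¹) = 2 := by norm_num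
      simp [klDiv, hp, Fintype.sum_prod_type, Fintype.sum_bool, h2,
        Real.logb_self_eq_one (show (1:ℝ) < 2 by norm_num)]
      norm_num
    have hmem : (1:ℝ) ∈ {d : ℝ | ∃ q : State → ℝ, IsPMF q ∧ PhiGConstraint q ∧
        (∀ z, q z = 0 → p z = 0) ∧ d = klDiv p q} :=
      ⟨fun _ => (16:ℝ)⁻¹, hpmf, hconstr, habs, hklval.symm⟩
    have hlb : ∀ d ∈ {d : ℝ | ∃ q : State → ℝ, IsPMF q ∧ PhiGConstraint q ∧
        (∀ z, q z = 0 → p z = 0) ∧ d = klDiv p q}, (1:ℝ) ≤ d := by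
      rintro d ⟨q, hq, hc, habs', rfl⟩
      exact kl_ge_one p q hp hq hc habs'
    have h1 := le_csInf ⟨1, hmem⟩ hlb
    linarith
end

section
/- Let A, B, C, D be finitely-valued random variables such that I(A; (C, D) | B) = 0 (the joint future is conditionally independent of the past given the present) and I(B; D | C) = 0 (the later future is conditionally independent of the present given the next state). Then I((A, B); (C, D)) = I(B; C). In particular, for a Markov process the excess entropy — the mutual information between the entire past-and-present and the entire future — reduces to the one-step time-delayed mutual information I(X_t; X_{t+1}). -/
open scoped BigOperators

open PhiID

/-- Entropy is invariant under relabeling the values by an equivalence. -/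
lemma entropy_equiv {Ω : Type*} [Fintype Ω] (P : Ω → ℝ) {α β : Type*}
    [Fintype α] [DecidableEq α] [Fintype β] [DecidableEq β]
    (e : α ≃ β) (X : Ω → α) :
    entropy P (fun ω => e (X ω)) = entropy P X := by
  unfold entropy
  congr 1
  rw [← Equiv.sum_comp e (fun b => prob P (fun ω => e (X ω)) b *
      Real.logb 2 (prob P (fun ω => e (X ω)) b))]
  refine Finset.sum_congr rfl fun a _ => ?_
  have h : prob P (fun ω => e (X ω)) (e a) = prob P X a := by
    unfold prob
    refine Finset.sum_congr rfl fun ω _ => ?_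
    simp [e.injective.eq_iff]
  rw [h]

/-- **For Markov processes, excess entropy reduces to the one-step time-delayed
mutual information.**  Let `A, B, C, D` be finitely-valued random variables with
`I(A; (C,D) | B) = 0` (the joint future is conditionally independent of the
past given the present) and `I(B; D | C) = 0` (the later future is
conditionally independent of the present given the next state).  Then
`I((A,B); (C,D)) = I(B; C)`. -/
theorem excess_entropy_markov
    {Ω : Type*} [Fintype Ω] (P : Ω → ℝ) (hP : IsPMF P)
    {α β γ δ : Type*} [Fintype α] [DecidableEq α] [Fintype β] [DecidableEq β]
    [Fintype γ] [DecidableEq γ] [Fintype δ] [DecidableEq δ]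
    (A : Ω → α) (B : Ω → β) (C : Ω → γ) (D : Ω → δ)
    (hpast : condMutualInfo P A (fun ω => (C ω, D ω)) B = 0)
    (hfut : condMutualInfo P B D C = 0) :
    mutualInfo P (fun ω => (A ω, B ω)) (fun ω => (C ω, D ω)) =
      mutualInfo P B C := by
  have E1 : entropy P (fun ω => ((C ω, D ω), B ω)) =
      entropy P (fun ω => (B ω, D ω, C ω)) :=
    entropy_equiv P
      (⟨fun p => ((p.2.2, p.2.1), p.1), fun p => (p.2, (p.1.2, p.1.1)),
        fun _ => rfl, fun _ => rfl⟩ : β × δ × γ ≃ (γ × δ) × β)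
      (fun ω => (B ω, D ω, C ω))
  have E2 : entropy P (fun ω => (A ω, (C ω, D ω), B ω)) =
      entropy P (fun ω => ((A ω, B ω), (C ω, D ω))) :=
    entropy_equiv P
      (⟨fun p => (p.1.1, (p.2, p.1.2)), fun p => ((p.1, p.2.2), p.2.1),
        fun _ => rfl, fun _ => rfl⟩ : (α × β) × γ × δ ≃ α × (γ × δ) × β)
      (fun ω => ((A ω, B ω), (C ω, D ω)))
  have E3 : entropy P (fun ω => (D ω, C ω)) = entropy P (fun ω => (C ω, D ω)) :=
    entropy_equiv P (Equiv.prodComm γ δ) (fun ω => (C ω, D ω))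
  unfold condMutualInfo at hpast hfut
  unfold mutualInfo
  linarith
end
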